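/- arXiv:1407.0912 — 2 statements merged into one kernel-verified Lean document; each statement's English description precedes it below -/
import Mathlib

section
/- (L^∞ isometry of the unfolding operator, Prop. 3.3(iv), p = ∞.) Let ε > 0 and fix a partition of (0,1) for the parameter ε. Then for every φ ∈ L^∞(R^ε) one has ‖T_ε(φ)‖_{L^∞((0,1)×Y*)} = ‖φ‖_{L^∞(R^ε)}, where both norms are essential suprema with respect to Lebesgue measure. -/
open MeasureTheory Set Filter Topology

noncomputable section

/-- The thin domain `R^ε = {(x,y) : x ∈ (0,1), 0 < y < ε G(x, x/ε)}`. -/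
def thinDomain (G : ℝ → ℝ → ℝ) (ε : ℝ) : Set (ℝ × ℝ) :=
  {z : ℝ × ℝ | z.1 ∈ Ioo (0 : ℝ) 1 ∧ z.2 ∈ Ioo (0 : ℝ) (ε * G z.1 (z.1 / ε))}

/-- The reference cell `Y* = (0,l₁) × (0,G₁)`. -/
def Ystar (l1 G1 : ℝ) : Set (ℝ × ℝ) := Ioo (0 : ℝ) l1 ×ˢ Ioo (0 : ℝ) G1

/-- A partition `0 = x₀ < x₁ < ⋯ < x_{N+1} = 1` of the interval `(0,1)` (for a parameter `ε`). -/
structure EpsPartition where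
  N : ℕ
  pts : ℕ → ℝ
  pts_zero : pts 0 = 0
  pts_last : pts (N + 1) = 1
  pts_lt : ∀ k ≤ N, pts k < pts (k + 1)

/-- The index `k` such that `x ∈ [x_k, x_{k+1})` (for `x ∈ [0,1)`). -/
def EpsPartition.idx (P : EpsPartition) (x : ℝ) : ℕ :=
  Nat.findGreatest (fun k => P.pts k ≤ x) P.N

/-- `[x]_ε`, the partition point just below `x`. -/
def EpsPartition.bracket (P : EpsPartition) (x : ℝ) : ℝ := P.pts (P.idx x)

/-- `Γ_{[x]_ε} = (x_{k+1} - x_k) / l(x_k)` for `x ∈ [x_k, x_{k+1})`. -/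
def EpsPartition.Gamma (P : EpsPartition) (l : ℝ → ℝ) (x : ℝ) : ℝ :=
  (P.pts (P.idx x + 1) - P.pts (P.idx x)) / l (P.pts (P.idx x))

/-- The unfolding operator `T_ε` associated to a partition, acting on a function `φ` on `R^ε`
(extended by zero to all of `ℝ²` via the indicator of `R^ε`). -/
def unfoldOp (G : ℝ → ℝ → ℝ) (l : ℝ → ℝ) (ε : ℝ) (P : EpsPartition)
    (φ : ℝ × ℝ → ℝ) : ℝ × ℝ × ℝ → ℝ := fun q =>
  if q.2.1 < l (P.bracket q.1) then
    (thinDomain G ε).indicator φ (P.bracket q.1 + P.Gamma l q.1 * q.2.1, ε * q.2.2)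
  else 0

/-- The averaging operator `U_ε`, the formal adjoint of `T_ε`. -/
def avgOp (l : ℝ → ℝ) (ε : ℝ) (P : EpsPartition) (ψ : ℝ × ℝ × ℝ → ℝ) : ℝ × ℝ → ℝ := fun z =>
  (1 / l (P.bracket z.1)) *
    ∫ y₁ in Ioo (0 : ℝ) (l (P.bracket z.1)),
      ψ (P.bracket z.1 + P.Gamma l z.1 * y₁, (z.1 - P.bracket z.1) / P.Gamma l z.1, z.2 / ε)

/-- The limit set `W = {(x,y₁,y₂) : x ∈ (0,1), 0 < y₁ < l(x), 0 < y₂ < G(x,y₁)}`. -/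
def Wset (G : ℝ → ℝ → ℝ) (l : ℝ → ℝ) : Set (ℝ × ℝ × ℝ) :=
  {q | q.1 ∈ Ioo (0 : ℝ) 1 ∧ q.2.1 ∈ Ioo (0 : ℝ) (l q.1) ∧ q.2.2 ∈ Ioo (0 : ℝ) (G q.1 q.2.1)}

/-- The set `W₀ = {(x,y₁) : x ∈ (0,1), 0 < y₁ < l(x)}`. -/
def W0set (l : ℝ → ℝ) : Set (ℝ × ℝ) :=
  {z : ℝ × ℝ | z.1 ∈ Ioo (0 : ℝ) 1 ∧ z.2 ∈ Ioo (0 : ℝ) (l z.1)}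

/-!
On each strip `[x_k, x_{k+1}) × Y*` the function `T_ε φ` does not depend on `x`: it is
`φ̃ ∘ A_k` on `{y₁ < l(x_k)}` and `0` elsewhere, where `A_k (y₁, y₂) = (x_k + Γ_k y₁, ε y₂)` is an
invertible affine map. Invertible affine maps of `ℝ²` preserve null sets in both directions and the
strips have positive length, so for every level `C` the set `{|T_ε φ| > C}` is null iff every
pulled-back cell `Y* ∩ {y₁ < l(x_k)} ∩ A_k⁻¹ {|φ| > C}` is null, iff `{|φ| > C} ∩ R^ε` is null:
since `G ≤ G₁`, the images of these cells cover it up to the lines `x = x_k`.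
An essential supremum only depends on which superlevel sets are null.
-/

open scoped ENNReal

lemma eLpNormEssSup_eq_of_null_iff {α β E F : Type*} [MeasurableSpace α] [MeasurableSpace β]
    [ENorm E] [ENorm F] {μ : Measure α} {ν : Measure β} {f : α → E} {g : β → F}
    (h : ∀ C : ℝ≥0∞, μ {x | C < ‖f x‖ₑ} = 0 ↔ ν {y | C < ‖g y‖ₑ} = 0) :
    eLpNormEssSup f μ = eLpNormEssSup g ν := by
  simp only [eLpNormEssSup, essSup_eq_sInf, h]

lemma quasiMeasurePreserving_affine {a b c : ℝ} (hb : b ≠ 0) (hc : c ≠ 0) :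
    Measure.QuasiMeasurePreserving (fun w : ℝ × ℝ => (a + b * w.1, c * w.2)) :=
  QuasiMeasurePreserving.prodMap
    ((measurePreserving_add_left volume a).quasiMeasurePreserving.comp
      (Measure.quasiMeasurePreserving_smul volume hb))
    (Measure.quasiMeasurePreserving_smul volume hc)

lemma volume_image_affine_eq_zero {a b c : ℝ} (hb : b ≠ 0) (hc : c ≠ 0) {S : Set (ℝ × ℝ)}
    (hS : volume S = 0) : volume ((fun w : ℝ × ℝ => (a + b * w.1, c * w.2)) '' S) = 0 := by
  rw [image_eq_preimage_of_inverse (g := fun z : ℝ × ℝ => (-a / b + b⁻¹ * z.1, c⁻¹ * z.2))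
    (fun w => Prod.ext (by field_simp; ring) (by field_simp))
    (fun z => Prod.ext (by field_simp; ring) (by field_simp))]
  exact (quasiMeasurePreserving_affine (inv_ne_zero hb) (inv_ne_zero hc)).preimage_null hS

lemma isOpen_thinDomain {G : ℝ → ℝ → ℝ} (ε : ℝ)
    (hG : ContinuousOn (fun z : ℝ × ℝ => G z.1 z.2) (Ioo 0 1 ×ˢ (univ : Set ℝ))) :
    IsOpen (thinDomain G ε) := by
  have hcont : ContinuousOn (fun z : ℝ × ℝ => ε * G z.1 (z.1 / ε) - z.2)
      (Ioo 0 1 ×ˢ (univ : Set ℝ)) :=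
    (continuousOn_const.mul (hG.comp (Continuous.continuousOn
      (by fun_prop : Continuous fun z : ℝ × ℝ => (z.1, z.1 / ε))) fun z hz => ⟨hz.1, trivial⟩)).sub
      continuousOn_snd
  have heq : thinDomain G ε = ((Ioo 0 1 ×ˢ univ) ∩
      (fun z : ℝ × ℝ => ε * G z.1 (z.1 / ε) - z.2) ⁻¹' Ioi 0) ∩ {z | 0 < z.2} := by
    ext z
    simp only [thinDomain, mem_ofPred_eq, mem_Ioo, mem_inter_iff, mem_prod, mem_univ,
      and_true, mem_preimage, mem_Ioi, sub_pos]
    tauto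
  rw [heq]
  exact (hcont.isOpen_inter_preimage (isOpen_Ioo.prod isOpen_univ) isOpen_Ioi).inter
    (isOpen_lt continuous_const continuous_snd)

namespace EpsPartition

variable (P : EpsPartition)

lemma strictMonoOn_pts : StrictMonoOn P.pts (Iic (P.N + 1)) :=
  strictMonoOn_Iic_of_lt_succ fun m hm => P.pts_lt m (Nat.lt_succ_iff.mp hm)

lemma pts_mem_Icc {k : ℕ} (hk : k ≤ P.N + 1) : P.pts k ∈ Icc 0 1 := by
  rw [← P.pts_zero, ← P.pts_last]
  exact ⟨P.strictMonoOn_pts.monotoneOn (Nat.zero_le _) hk (Nat.zero_le k),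
    P.strictMonoOn_pts.monotoneOn hk (mem_Iic.mpr le_rfl) hk⟩

lemma Ioo_pts_subset {k : ℕ} (hk : k ≤ P.N) : Ioo (P.pts k) (P.pts (k + 1)) ⊆ Ioo 0 1 :=
  Ioo_subset_Ioo (P.pts_mem_Icc (by omega)).1 (P.pts_mem_Icc (by omega)).2

lemma idx_le (x : ℝ) : P.idx x ≤ P.N :=
  Nat.findGreatest_le _

lemma idx_eq_of_mem_Ico {k : ℕ} {x : ℝ} (hk : k ≤ P.N)
    (hx : x ∈ Ico (P.pts k) (P.pts (k + 1))) : P.idx x = k := by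
  refine le_antisymm (not_lt.mp fun hlt => hx.2.not_ge ?_) (Nat.le_findGreatest hk hx.1)
  calc P.pts (k + 1) ≤ P.pts (P.idx x) :=
        P.strictMonoOn_pts.monotoneOn (mem_Iic.mpr (by omega))
          (mem_Iic.mpr (by have := P.idx_le x; omega)) hlt
    _ ≤ x := Nat.findGreatest_spec (P := fun j => P.pts j ≤ x) hk hx.1

lemma mem_Ico_idx {x : ℝ} (hx : x ∈ Ico 0 1) :
    x ∈ Ico (P.pts (P.idx x)) (P.pts (P.idx x + 1)) := by
  refine ⟨Nat.findGreatest_spec (P := fun j => P.pts j ≤ x) (Nat.zero_le _)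
    (P.pts_zero ▸ hx.1), ?_⟩
  rcases (P.idx_le x).lt_or_eq with h | h
  · exact not_le.mp (Nat.findGreatest_is_greatest (Nat.lt_succ_self _) h)
  · rw [h, P.pts_last]
    exact hx.2

lemma volume_setOf_idx_eq_zero_iff (E : ℕ → Set (ℝ × ℝ)) :
    volume {q : ℝ × ℝ × ℝ | q.1 ∈ Ioo 0 1 ∧ q.2 ∈ E (P.idx q.1)} = 0 ↔
      ∀ k ≤ P.N, volume (E k) = 0 := by
  constructor
  · intro h k hk
    have hsub : Ioo (P.pts k) (P.pts (k + 1)) ×ˢ E k ⊆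
        {q : ℝ × ℝ × ℝ | q.1 ∈ Ioo 0 1 ∧ q.2 ∈ E (P.idx q.1)} := by
      rintro ⟨x, w⟩ ⟨hx, hw⟩
      exact ⟨P.Ioo_pts_subset hk hx, by rwa [P.idx_eq_of_mem_Ico hk (Ioo_subset_Ico_self hx)]⟩
    have hprod := measure_mono_null hsub h
    rw [Measure.volume_eq_prod, Measure.prod_prod, Real.volume_Ioo, mul_eq_zero,
      ENNReal.ofReal_eq_zero, sub_nonpos] at hprod
    exact hprod.resolve_left (P.pts_lt k hk).not_ge
  · intro h
    have hsub : {q : ℝ × ℝ × ℝ | q.1 ∈ Ioo 0 1 ∧ q.2 ∈ E (P.idx q.1)} ⊆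
        ⋃ k ∈ Iic P.N, univ ×ˢ E k := fun q hq =>
      mem_biUnion (mem_Iic.mpr (P.idx_le q.1)) ⟨mem_univ q.1, hq.2⟩
    refine measure_mono_null hsub ((measure_biUnion_null_iff (to_countable _)).mpr fun k hk => ?_)
    rw [Measure.volume_eq_prod, Measure.prod_prod, h k hk, mul_zero]

variable (l : ℝ → ℝ) (ε : ℝ)

def scale (k : ℕ) : ℝ := (P.pts (k + 1) - P.pts k) / l (P.pts k)

def cellMap (k : ℕ) (w : ℝ × ℝ) : ℝ × ℝ := (P.pts k + P.scale l k * w.1, ε * w.2)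

def cellPullback (l1 G1 : ℝ) (B : Set (ℝ × ℝ)) (k : ℕ) : Set (ℝ × ℝ) :=
  {w ∈ Ystar l1 G1 | w.1 < l (P.pts k) ∧ P.cellMap l ε k w ∈ B}

variable {l ε}

lemma scale_pos {k : ℕ} (hk : k ≤ P.N) (hl : 0 < l (P.pts k)) : 0 < P.scale l k :=
  div_pos (sub_pos.mpr (P.pts_lt k hk)) hl

lemma mem_image_cellPullback {G : ℝ → ℝ → ℝ} {l1 G1 : ℝ} (hε : 0 < ε)
    (hG : ∀ x ∈ Ioo (0 : ℝ) 1, ∀ y, G x y ≤ G1) {k : ℕ} (hk : k ≤ P.N)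
    (hl : l (P.pts k) ∈ Ioc 0 l1) {B : Set (ℝ × ℝ)} {z : ℝ × ℝ} (hzB : z ∈ B)
    (hz : z ∈ thinDomain G ε) (hx : z.1 ∈ Ioo (P.pts k) (P.pts (k + 1))) :
    z ∈ P.cellMap l ε k '' P.cellPullback l ε l1 G1 B k := by
  have hΓ := P.scale_pos hk hl.1
  have hmap : P.cellMap l ε k ((z.1 - P.pts k) / P.scale l k, z.2 / ε) = z :=
    Prod.ext (by simp only [cellMap]; field_simp; ring) (by simp only [cellMap]; field_simp)
  have hw₁ : (z.1 - P.pts k) / P.scale l k < l (P.pts k) := by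
    rw [div_lt_iff₀ hΓ, scale, mul_div_cancel₀ _ hl.1.ne']
    linarith [hx.2]
  have hw₂ : z.2 / ε < G1 := by
    rw [div_lt_iff₀ hε]
    nlinarith [hz.2.2, hG z.1 hz.1 (z.1 / ε)]
  exact ⟨_, ⟨⟨⟨div_pos (sub_pos.mpr hx.1) hΓ, hw₁.trans_le hl.2⟩, div_pos hz.2.1 hε, hw₂⟩, hw₁,
    by rwa [hmap]⟩, hmap⟩

lemma subset_union_image_cellPullback {G : ℝ → ℝ → ℝ} {l1 G1 : ℝ} (hε : 0 < ε)
    (hG : ∀ x ∈ Ioo (0 : ℝ) 1, ∀ y, G x y ≤ G1) (hl : ∀ k ≤ P.N, l (P.pts k) ∈ Ioc 0 l1)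
    {B : Set (ℝ × ℝ)} (hB : B ⊆ thinDomain G ε) :
    B ⊆ (P.pts '' Iic (P.N + 1)) ×ˢ univ ∪
      ⋃ k ∈ Iic P.N, P.cellMap l ε k '' P.cellPullback l ε l1 G1 B k := by
  intro z hzB
  have hz := hB hzB
  by_cases hline : z.1 ∈ P.pts '' Iic (P.N + 1)
  · exact Or.inl ⟨hline, mem_univ _⟩
  have hk := P.idx_le z.1
  have hx := P.mem_Ico_idx (Ioo_subset_Ico_self hz.1)
  have hx' : z.1 ∈ Ioo (P.pts (P.idx z.1)) (P.pts (P.idx z.1 + 1)) :=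
    ⟨hx.1.lt_of_ne fun h => hline ⟨_, mem_Iic.mpr (by omega), h⟩, hx.2⟩
  exact Or.inr (mem_biUnion (mem_Iic.mpr hk)
    (P.mem_image_cellPullback hε hG hk (hl _ hk) hzB hz hx'))

lemma volume_eq_zero_iff_cellPullback {G : ℝ → ℝ → ℝ} {l1 G1 : ℝ} (hε : 0 < ε)
    (hG : ∀ x ∈ Ioo (0 : ℝ) 1, ∀ y, G x y ≤ G1) (hl : ∀ k ≤ P.N, l (P.pts k) ∈ Ioc 0 l1)
    {B : Set (ℝ × ℝ)} (hB : B ⊆ thinDomain G ε) :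
    volume B = 0 ↔ ∀ k ≤ P.N, volume (P.cellPullback l ε l1 G1 B k) = 0 := by
  constructor
  · intro h k hk
    exact measure_mono_null (fun w hw => hw.2.2)
      ((quasiMeasurePreserving_affine (P.scale_pos hk (hl k hk).1).ne' hε.ne').preimage_null h)
  · intro h
    refine measure_mono_null (P.subset_union_image_cellPullback hε hG hl hB)
      (measure_union_null ?_ ((measure_biUnion_null_iff (to_countable _)).mpr fun k hk => ?_))
    · rw [Measure.volume_eq_prod, Measure.prod_prod,
        ((finite_Iic _).image _).measure_zero, zero_mul]
    · exact volume_image_affine_eq_zero (P.scale_pos hk (hl k hk).1).ne' hε.ne' (h k hk)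

end EpsPartition

lemma setOf_lt_enorm_unfoldOp_inter (G : ℝ → ℝ → ℝ) (l : ℝ → ℝ) (ε : ℝ) (P : EpsPartition)
    (φ : ℝ × ℝ → ℝ) (l1 G1 : ℝ) (C : ℝ≥0∞) :
    {q | C < ‖unfoldOp G l ε P φ q‖ₑ} ∩ (Ioo 0 1 ×ˢ Ystar l1 G1) =
      {q | q.1 ∈ Ioo 0 1 ∧ q.2 ∈
        P.cellPullback l ε l1 G1 ({z | C < ‖φ z‖ₑ} ∩ thinDomain G ε) (P.idx q.1)} := by
  ext ⟨x, w⟩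
  have hT : unfoldOp G l ε P φ (x, w) = if w.1 < l (P.pts (P.idx x)) then
      (thinDomain G ε).indicator φ (P.cellMap l ε (P.idx x) w) else 0 := rfl
  simp only [EpsPartition.cellPullback, mem_inter_iff, mem_ofPred_eq, mem_prod, hT]
  by_cases hw : w.1 < l (P.pts (P.idx x))
  · by_cases hz : P.cellMap l ε (P.idx x) w ∈ thinDomain G ε <;> simp [hw, hz, and_comm, and_assoc]
  · simp [hw]

theorem unfolding_Linfty_isometry_general
    (l0 l1 G0 G1 : ℝ) (hl0 : 0 < l0)
    (l : ℝ → ℝ)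
    (hlb : ∀ x ∈ Icc (0 : ℝ) 1, l0 ≤ l x ∧ l x < l1)
    (G : ℝ → ℝ → ℝ)
    (hGcont : ContinuousOn (fun z : ℝ × ℝ => G z.1 z.2) (Ioo 0 1 ×ˢ (univ : Set ℝ)))
    (hGb : ∀ x ∈ Ioo (0 : ℝ) 1, ∀ y : ℝ, G0 ≤ G x y ∧ G x y ≤ G1)
    (ε : ℝ) (hε : 0 < ε) (P : EpsPartition)
    (φ : ℝ × ℝ → ℝ) :
    eLpNorm (unfoldOp G l ε P φ) ⊤ (volume.restrict (Ioo (0 : ℝ) 1 ×ˢ Ystar l1 G1))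
      = eLpNorm φ ⊤ (volume.restrict (thinDomain G ε)) := by
  have hl : ∀ k ≤ P.N, l (P.pts k) ∈ Ioc 0 l1 := fun k hk =>
    have hlk := hlb _ (P.pts_mem_Icc (by omega))
    ⟨hl0.trans_le hlk.1, hlk.2.le⟩
  have hrect : MeasurableSet (Ioo (0 : ℝ) 1 ×ˢ Ystar l1 G1) :=
    measurableSet_Ioo.prod (measurableSet_Ioo.prod measurableSet_Ioo)
  rw [eLpNorm_exponent_top, eLpNorm_exponent_top]
  refine eLpNormEssSup_eq_of_null_iff fun C => ?_
  rw [Measure.restrict_apply' hrect,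
    Measure.restrict_apply' (isOpen_thinDomain ε hGcont).measurableSet,
    setOf_lt_enorm_unfoldOp_inter, P.volume_setOf_idx_eq_zero_iff,
    P.volume_eq_zero_iff_cellPullback hε (fun x hx y => (hGb x hx y).2) hl inter_subset_right]

/-- `L^∞` isometry of the unfolding operator (Prop. 3.3(iv), `p = ∞`). -/
theorem unfolding_Linfty_isometry
    (l0 l1 G0 G1 : ℝ) (hl0 : 0 < l0) (hl01 : l0 < l1) (hG0 : 0 < G0) (hG01 : G0 ≤ G1)
    (l : ℝ → ℝ) (hlC1 : ContDiffOn ℝ 1 l (Ioo 0 1))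
    (hlb : ∀ x ∈ Icc (0 : ℝ) 1, l0 ≤ l x ∧ l x < l1)
    (G : ℝ → ℝ → ℝ)
    (hGcont : ContinuousOn (fun z : ℝ × ℝ => G z.1 z.2) (Ioo 0 1 ×ˢ (univ : Set ℝ)))
    (hGb : ∀ x ∈ Ioo (0 : ℝ) 1, ∀ y : ℝ, G0 ≤ G x y ∧ G x y ≤ G1)
    (hGper : ∀ x ∈ Ioo (0 : ℝ) 1, ∀ y : ℝ, G x (y + l x) = G x y)
    (ε : ℝ) (hε : 0 < ε) (P : EpsPartition)
    (φ : ℝ × ℝ → ℝ)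
    (hφ : MemLp φ ⊤ (volume.restrict (thinDomain G ε))) :
    eLpNorm (unfoldOp G l ε P φ) ⊤ (volume.restrict (Ioo (0 : ℝ) 1 ×ˢ Ystar l1 G1))
      = eLpNorm φ ⊤ (volume.restrict (thinDomain G ε)) :=
  unfolding_Linfty_isometry_general l0 l1 G0 G1 hl0 l hlb G hGcont hGb ε hε P φ
end
end

section
/- (Admissibility of the l(x)-partition near non-degenerate points, Section 4.) Let l : (0,1) → ℝ be continuously differentiable with l_0 ≤ l(t) < l_1 for all t ∈ (0,1), where 0 < l_0 < l_1. Let x ∈ (0,1) satisfy x·l'(x) ≠ l(x). Then there exist ε₁ > 0 and C > 0 such that for every ε ∈ (0, ε₁) there exist t ∈ (0,1) and a positive integer k with t/l(t) = kε and |x − t| ≤ Cε. -/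
open MeasureTheory Set Filter Topology

noncomputable section

/-
Near a non-degenerate point `x` the map `f t = t / l t` has derivative
`(l x - x l'(x)) / l(x)² ≠ 0`, so by the inverse function theorem it has a local inverse that
is differentiable, hence locally Lipschitz, at `f x`. The multiple `k ε` of `ε` closest above
`f x` lies within `ε` of `f x`, so its preimage `t` under the local inverse lies within `C ε`
of `x`.
-/

theorem exists_pos_nat_dist_mul_lt {y ε : ℝ} (hy : 0 < y) (hε : 0 < ε) :
    ∃ k : ℕ, 0 < k ∧ dist (k * ε) y < ε := by
  refine ⟨⌈y / ε⌉₊, Nat.ceil_pos.2 (div_pos hy hε), ?_⟩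
  have hle : y / ε ≤ ⌈y / ε⌉₊ := Nat.le_ceil _
  have hlt : (⌈y / ε⌉₊ : ℝ) < y / ε + 1 := Nat.ceil_lt_add_one (div_pos hy hε).le
  rw [div_le_iff₀ hε] at hle
  rw [← sub_lt_iff_lt_add, lt_div_iff₀ hε] at hlt
  rw [Real.dist_eq, abs_lt]
  constructor <;> nlinarith

theorem HasStrictFDerivAt.exists_eventually_preimage_near {𝕜 E F : Type*}
    [NontriviallyNormedField 𝕜] [NormedAddCommGroup E] [NormedSpace 𝕜 E] [CompleteSpace E]
    [NormedAddCommGroup F] [NormedSpace 𝕜 F] {f : E → F} {f' : E ≃L[𝕜] F} {a : E}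
    (hf : HasStrictFDerivAt f (f' : E →L[𝕜] F) a) {s : Set E} (hs : s ∈ 𝓝 a) :
    ∃ C > 0, ∀ᶠ y in 𝓝 (f a), ∃ t ∈ s, f t = y ∧ ‖t - a‖ ≤ C * ‖y - f a‖ := by
  obtain ⟨C, hC, hbound⟩ := hf.to_localInverse.hasFDerivAt.isBigO_sub.exists_pos
  refine ⟨C, hC, ?_⟩
  filter_upwards [hf.localInverse_tendsto hs, hf.eventually_right_inverse, hbound.bound]
    with y hys hfy hy
  exact ⟨_, hys, hfy, by simpa only [hf.localInverse_apply_image] using hy⟩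

theorem HasStrictDerivAt.exists_eventually_preimage_near {𝕜 : Type*}
    [NontriviallyNormedField 𝕜] [CompleteSpace 𝕜] {f : 𝕜 → 𝕜} {f' a : 𝕜}
    (hf : HasStrictDerivAt f f' a) (hf' : f' ≠ 0) {s : Set 𝕜} (hs : s ∈ 𝓝 a) :
    ∃ C > 0, ∀ᶠ y in 𝓝 (f a), ∃ t ∈ s, f t = y ∧ ‖t - a‖ ≤ C * ‖y - f a‖ :=
  (hf.hasStrictFDerivAt_equiv hf').exists_eventually_preimage_near hs

theorem lx_partition_admissible_general
    (l0 l1 : ℝ) (hl0 : 0 < l0)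
    (l : ℝ → ℝ) (hlC1 : ContDiffOn ℝ 1 l (Ioo 0 1))
    (hlb : ∀ t ∈ Ioo (0 : ℝ) 1, l0 ≤ l t ∧ l t < l1)
    (x : ℝ) (hx : x ∈ Ioo (0 : ℝ) 1) (hnd : x * deriv l x ≠ l x) :
    ∃ ε₁ : ℝ, 0 < ε₁ ∧ ∃ C : ℝ, 0 < C ∧
      ∀ ε : ℝ, 0 < ε → ε < ε₁ →
        ∃ t ∈ Ioo (0 : ℝ) 1, ∃ k : ℕ, 0 < k ∧
          t / l t = (k : ℝ) * ε ∧ |x - t| ≤ C * ε := by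
  have hx_nhds : Ioo (0 : ℝ) 1 ∈ 𝓝 x := isOpen_Ioo.mem_nhds hx
  have hlx : 0 < l x := hl0.trans_le (hlb x hx).1
  have hf : HasStrictDerivAt (fun t => t / l t) ((1 * l x - x * deriv l x) / l x ^ 2) x :=
    (hasStrictDerivAt_id x).fun_div ((hlC1.contDiffAt hx_nhds).hasStrictDerivAt one_ne_zero)
      hlx.ne'
  have hf' : (1 * l x - x * deriv l x) / l x ^ 2 ≠ 0 :=
    div_ne_zero (by rwa [one_mul, sub_ne_zero, ne_comm]) (by positivity)
  obtain ⟨C, hC, hnear⟩ := hf.exists_eventually_preimage_near hf' hx_nhds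
  obtain ⟨ρ, hρ, hball⟩ := Metric.eventually_nhds_iff.1 hnear
  refine ⟨ρ, hρ, C, hC, fun ε hε hερ => ?_⟩
  obtain ⟨k, hk, hdist⟩ := exists_pos_nat_dist_mul_lt (div_pos hx.1 hlx) hε
  obtain ⟨t, ht, hft, hxt⟩ := hball (hdist.trans hερ)
  refine ⟨t, ht, k, hk, hft, ?_⟩
  calc |x - t| = ‖t - x‖ := by rw [abs_sub_comm, Real.norm_eq_abs]
    _ ≤ C * ‖k * ε - x / l x‖ := hxt
    _ ≤ C * ε := by gcongr; exact hdist.le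

/-- Admissibility of the `l(x)`-partition near non-degenerate points (Section 4). -/
theorem lx_partition_admissible
    (l0 l1 : ℝ) (hl0 : 0 < l0) (hl01 : l0 < l1)
    (l : ℝ → ℝ) (hlC1 : ContDiffOn ℝ 1 l (Ioo 0 1))
    (hlb : ∀ t ∈ Ioo (0 : ℝ) 1, l0 ≤ l t ∧ l t < l1)
    (x : ℝ) (hx : x ∈ Ioo (0 : ℝ) 1) (hnd : x * deriv l x ≠ l x) :
    ∃ ε₁ : ℝ, 0 < ε₁ ∧ ∃ C : ℝ, 0 < C ∧
      ∀ ε : ℝ, 0 < ε → ε < ε₁ →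
        ∃ t ∈ Ioo (0 : ℝ) 1, ∃ k : ℕ, 0 < k ∧
          t / l t = (k : ℝ) * ε ∧ |x - t| ≤ C * ε :=
  lx_partition_admissible_general l0 l1 hl0 l hlC1 hlb x hx hnd
end
end
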